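/- arXiv:0801.2812 — 3 statements merged into one kernel-verified Lean document; each statement's English description precedes it below -/
import Mathlib

section
/- Let v_1, …, v_n be points in ℚ^{n-2} that are the vertices of a simplicial convex polytope containing 0 in its interior, where v_1,…,v_n affinely span ℚ^{n-2}. Then there exists, uniquely up to scaling, a collection of rational numbers α_1, …, α_n, not all zero, such that Σ α_i = 0 and Σ α_i v_i = 0; moreover, every α_i in such a relation is nonzero. -/
open Finset

/-- Separating functional: if `x ∉ U`, there is a functional vanishing on `U` with value `1`
at `x`. -/
lemma exists_dual_sep {V : Type*} [AddCommGroup V] [Module ℚ V]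
    (U : Submodule ℚ V) (x : V) (hx : x ∉ U) :
    ∃ φ : V →ₗ[ℚ] ℚ, (∀ y ∈ U, φ y = 0) ∧ φ x = 1 := by
  have hq : U.mkQ x ≠ 0 := by
    simpa [Submodule.mkQ_apply, Submodule.Quotient.mk_eq_zero] using hx
  have hex : ∃ ψ : Module.Dual ℚ (V ⧸ U), ψ (U.mkQ x) ≠ 0 := by
    by_contra h
    push_neg at h
    exact hq ((Module.forall_dual_apply_eq_zero_iff ℚ _).1 h)
  obtain ⟨ψ, hψ⟩ := hex
  refine ⟨(ψ (U.mkQ x))⁻¹ • (ψ.comp U.mkQ), fun y hy => ?_, ?_⟩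
  · have : U.mkQ y = 0 := (Submodule.Quotient.mk_eq_zero U).2 hy
    simp [this]
  · simp only [LinearMap.smul_apply, LinearMap.coe_comp, Function.comp_apply, smul_eq_mul,
      Submodule.mkQ_apply]
    exact inv_mul_cancel₀ (by simpa using hψ)

/-- Let `v 0, …, v (d+1)` be `n = d + 2` points of `ℚ^d` which are the
vertices of a simplicial convex polytope containing `0` in its interior and spanning
`ℚ^d`.  Then there is, uniquely up to scaling, a collection of rationals `α i`, not all
zero, with `∑ α i = 0` and `∑ α i • v i = 0`; moreover all `α i` in such a relation are
nonzero. -/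
theorem stmt1 (d : ℕ) (v : Fin (d + 2) → (Fin d → ℚ))
    (hspan : Submodule.span ℚ (Set.range v) = ⊤)
    (hvert : ∀ i, v i ∉ convexHull ℚ (v '' {j | j ≠ i}))
    (h0 : (0 : Fin d → ℚ) ∈ interior (convexHull ℚ (Set.range v)))
    (hsimp : ∀ (f : (Fin d → ℚ) →ₗ[ℚ] ℚ) (c : ℚ), f ≠ 0 → (∀ i, f (v i) ≤ c) →
      AffineIndependent ℚ (fun j : {i // f (v i) = c} => v j)) :
    ∃ α : Fin (d + 2) → ℚ, α ≠ 0 ∧ (∑ i, α i = 0) ∧ (∑ i, α i • v i = 0) ∧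
      (∀ i, α i ≠ 0) ∧
      ∀ β : Fin (d + 2) → ℚ, (∑ i, β i = 0) → (∑ i, β i • v i = 0) →
        ∃ c : ℚ, β = c • α := by
  classical
  -- the "homogenized" points
  set u : Fin (d + 2) → ℚ × (Fin d → ℚ) := fun i => (1, v i) with hu
  -- (1, 0) is in the span of the `u i`, since 0 is in the affine span of the `v i`
  have h0span : (0 : Fin d → ℚ) ∈ affineSpan ℚ (Set.range v) :=
    convexHull_subset_affineSpan _ (interior_subset h0)
  have hsumu : ∀ w : Fin (d + 2) → ℚ,
      ∑ i, w i • u i = (∑ i, w i, ∑ i, w i • v i) := by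
    intro w
    rw [Prod.ext_iff]
    constructor
    · rw [Prod.fst_sum]; simp [hu]
    · rw [Prod.snd_sum]; simp [hu]
  obtain ⟨μ, hμ1, hμ0⟩ := eq_affineCombination_of_mem_affineSpan_of_fintype h0span
  rw [Finset.affineCombination_eq_linear_combination _ _ _ hμ1] at hμ0
  have hz : ((1 : ℚ), (0 : Fin d → ℚ)) ∈ Submodule.span ℚ (Set.range u) := by
    have he : ((1 : ℚ), (0 : Fin d → ℚ)) = ∑ i, μ i • u i := by
      rw [hsumu, Prod.ext_iff]
      exact ⟨hμ1.symm, hμ0⟩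
    rw [he]
    exact Submodule.sum_mem _ fun i _ =>
      Submodule.smul_mem _ _ (Submodule.subset_span ⟨i, rfl⟩)
  -- the `u i` span everything
  have huspan : Submodule.span ℚ (Set.range u) = ⊤ := by
    rw [eq_top_iff]
    rintro ⟨a, x⟩ -
    have hx : x ∈ Submodule.span ℚ (Set.range v) := by rw [hspan]; trivial
    have hmap : Submodule.map (LinearMap.inr ℚ ℚ (Fin d → ℚ)) (Submodule.span ℚ (Set.range v)) ≤
        Submodule.span ℚ (Set.range u) := by
      rw [Submodule.map_span, Submodule.span_le]
      rintro _ ⟨_, ⟨i, rfl⟩, rfl⟩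
      have he : (LinearMap.inr ℚ ℚ (Fin d → ℚ)) (v i) = u i - (1, 0) := by
        simp [hu, Prod.ext_iff]
      rw [he]
      exact sub_mem (Submodule.subset_span ⟨i, rfl⟩) hz
    have h2 : ((0 : ℚ), x) ∈ Submodule.span ℚ (Set.range u) := hmap ⟨x, hx, rfl⟩
    have he : ((a : ℚ), x) = a • ((1 : ℚ), (0 : Fin d → ℚ)) + ((0 : ℚ), x) := by
      simp [Prod.ext_iff]
    rw [he]
    exact add_mem (Submodule.smul_mem _ _ hz) h2
  -- KEY: every nonzero relation has all coefficients nonzero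
  have key : ∀ β : Fin (d + 2) → ℚ, (∑ i, β i = 0) → (∑ i, β i • v i = 0) → β ≠ 0 →
      ∀ k, β k ≠ 0 := by
    intro β hs hv hβ k hk
    obtain ⟨j, hj⟩ : ∃ j, β j ≠ 0 := by
      by_contra h; push_neg at h; exact hβ (funext h)
    have hjk : j ≠ k := fun h => hj (by rw [h]; exact hk)
    have hrel : ∑ i, β i • u i = 0 := by
      rw [hsumu, Prod.ext_iff]
      exact ⟨hs, hv⟩
    set U : Submodule ℚ (ℚ × (Fin d → ℚ)) := Submodule.span ℚ (u '' {i | i ≠ k}) with hU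
    have hUk : u k ∉ U := by
      intro hmem
      have hUtop : U = ⊤ := by
        rw [eq_top_iff, ← huspan, Submodule.span_le]
        rintro _ ⟨i, rfl⟩
        by_cases hik : i = k
        · rw [hik]; exact hmem
        · exact Submodule.subset_span ⟨i, hik, rfl⟩
      set t : Finset (Fin (d + 2)) := (Finset.univ.erase k).erase j with ht
      have hjek : j ∈ Finset.univ.erase k := Finset.mem_erase.2 ⟨hjk, Finset.mem_univ j⟩
      have htcard : t.card = d := by
        rw [ht, Finset.card_erase_of_mem hjek, Finset.card_erase_of_mem (Finset.mem_univ k)]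
        simp
      have h1 : ∑ i ∈ Finset.univ.erase k, β i • u i = 0 := by
        rw [← Finset.add_sum_erase _ _ (Finset.mem_univ k), hk, zero_smul, zero_add] at hrel
        exact hrel
      have h2 : β j • u j + ∑ i ∈ t, β i • u i = 0 := by
        rw [← Finset.add_sum_erase _ _ hjek] at h1
        exact h1
      have hju : u j ∈ Submodule.span ℚ ((t.image u : Finset _) : Set (ℚ × (Fin d → ℚ))) := by
        have e1 : (β j)⁻¹ • (β j • u j) = u j := by
          rw [smul_smul, inv_mul_cancel₀ hj, one_smul]
        have e2 : β j • u j = -∑ i ∈ t, β i • u i := eq_neg_of_add_eq_zero_left h2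
        rw [← e1, e2]
        refine Submodule.smul_mem _ _ (neg_mem (Submodule.sum_mem _ fun i hi => ?_))
        exact Submodule.smul_mem _ _
          (Submodule.subset_span (Finset.mem_coe.2 (Finset.mem_image_of_mem u hi)))
      have hUle : U ≤ Submodule.span ℚ ((t.image u : Finset _) : Set (ℚ × (Fin d → ℚ))) := by
        rw [hU, Submodule.span_le]
        rintro _ ⟨i, (hik : i ≠ k), rfl⟩
        by_cases hij : i = j
        · rw [hij]; exact hju
        · exact Submodule.subset_span (Finset.mem_coe.2 (Finset.mem_image_of_mem u
            (Finset.mem_erase.2 ⟨hij, Finset.mem_erase.2 ⟨hik, Finset.mem_univ i⟩⟩)))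
      have hfin : Module.finrank ℚ (ℚ × (Fin d → ℚ)) ≤ d := by
        calc Module.finrank ℚ (ℚ × (Fin d → ℚ))
            = Module.finrank ℚ (⊤ : Submodule ℚ (ℚ × (Fin d → ℚ))) := (finrank_top _ _).symm
          _ ≤ Module.finrank ℚ (Submodule.span ℚ
                ((t.image u : Finset _) : Set (ℚ × (Fin d → ℚ)))) :=
              Submodule.finrank_mono (hUtop ▸ hUle)
          _ ≤ (t.image u).card := finrank_span_finset_le_card _
          _ ≤ t.card := Finset.card_image_le
          _ = d := htcard
      have hfr : Module.finrank ℚ (ℚ × (Fin d → ℚ)) = 1 + d := by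
        rw [Module.finrank_prod, Module.finrank_self, Module.finrank_pi]
        simp
      omega
    obtain ⟨φ, hφ0, hφ1⟩ := exists_dual_sep U (u k) hUk
    set f : (Fin d → ℚ) →ₗ[ℚ] ℚ := -(φ.comp (LinearMap.inr ℚ ℚ (Fin d → ℚ))) with hf
    set c : ℚ := φ (1, 0) with hc
    have hφeq : ∀ (a : ℚ) (x : Fin d → ℚ), φ (a, x) = a * c - f x := by
      intro a x
      have he : ((a : ℚ), x) = a • ((1 : ℚ), (0 : Fin d → ℚ)) + ((0 : ℚ), x) := by
        simp [Prod.ext_iff]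
      rw [he, map_add, map_smul]
      simp [hf, hc, smul_eq_mul]
    have hvi : ∀ i, i ≠ k → f (v i) = c := by
      intro i hik
      have h1 : φ (u i) = 0 := hφ0 (u i) (Submodule.subset_span ⟨i, hik, rfl⟩)
      have h2 : φ (u i) = 1 * c - f (v i) := hφeq 1 (v i)
      rw [h1] at h2
      linarith [h2]
    have hvk : f (v k) = c - 1 := by
      have h2 : φ (u k) = 1 * c - f (v k) := hφeq 1 (v k)
      rw [hφ1] at h2
      linarith [h2]
    obtain ⟨i₀, hi₀⟩ := exists_ne k
    have hfne : f ≠ 0 := by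
      intro h
      have h1 : f (v i₀) = c := hvi i₀ hi₀
      rw [h] at h1 hvk
      simp at h1 hvk
      linarith
    have hle : ∀ i, f (v i) ≤ c := by
      intro i
      by_cases hik : i = k
      · rw [hik, hvk]; linarith
      · exact (hvi i hik).le
    have haff := affineIndependent_iff.1 (hsimp f c hfne hle)
    have hmemiff : ∀ x : Fin (d + 2), x ∈ Finset.univ.erase k ↔ f (v x) = c := by
      intro x
      constructor
      · intro hx
        exact hvi x (Finset.mem_erase.1 hx).1
      · intro hx
        refine Finset.mem_erase.2 ⟨?_, Finset.mem_univ x⟩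
        intro hxk
        rw [hxk, hvk] at hx
        linarith
    have hsum1 : ∑ x : {i // f (v i) = c}, β x.1 = 0 := by
      rw [← Finset.sum_subtype _ hmemiff (fun i => β i)]
      rw [Finset.sum_erase _ hk]
      exact hs
    have hsum2 : ∑ x : {i // f (v i) = c}, β x.1 • v x.1 = 0 := by
      rw [← Finset.sum_subtype _ hmemiff (fun i => β i • v i)]
      rw [Finset.sum_erase _ (by rw [hk, zero_smul])]
      exact hv
    have hj0 := haff Finset.univ (fun x => β x.1) hsum1 hsum2
      ⟨j, hvi j hjk⟩ (Finset.mem_univ _)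
    exact hj hj0
  -- existence of a nonzero relation, by rank count
  let T : (Fin (d + 2) → ℚ) →ₗ[ℚ] ℚ × (Fin d → ℚ) :=
  { toFun := fun β => (∑ i, β i, ∑ i, β i • v i)
    map_add' := by
      intro a b
      simp [Finset.sum_add_distrib, add_smul, Prod.ext_iff]
    map_smul' := by
      intro r a
      simp [Prod.ext_iff, Finset.mul_sum, Finset.smul_sum, mul_smul] }
  have hker : ∃ α : Fin (d + 2) → ℚ, α ≠ 0 ∧ T α = 0 := by
    by_contra h
    push_neg at h
    have hinj : Function.Injective T := by
      rw [← LinearMap.ker_eq_bot, Submodule.eq_bot_iff]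
      intro x hx
      by_contra hx0
      exact h x hx0 hx
    have hle := LinearMap.finrank_le_finrank_of_injective hinj
    rw [Module.finrank_pi, Module.finrank_prod, Module.finrank_self, Module.finrank_pi] at hle
    simp at hle
    omega
  obtain ⟨α, hα0, hTα⟩ := hker
  have hTα' : ((∑ i, α i, ∑ i, α i • v i) : ℚ × (Fin d → ℚ)) = (0, 0) := hTα
  rw [Prod.mk.injEq] at hTα'
  obtain ⟨hαs, hαv⟩ := hTα'
  refine ⟨α, hα0, hαs, hαv, key α hαs hαv hα0, ?_⟩
  intro β hβs hβv
  refine ⟨β 0 / α 0, ?_⟩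
  by_contra hne
  set cc : ℚ := β 0 / α 0 with hcc
  have hγne : β - cc • α ≠ 0 := fun h => hne (by rwa [sub_eq_zero] at h)
  have hγs : ∑ i, (β - cc • α) i = 0 := by
    simp only [Pi.sub_apply, Pi.smul_apply, smul_eq_mul]
    rw [Finset.sum_sub_distrib, ← Finset.mul_sum, hβs, hαs, mul_zero, sub_zero]
  have hγv : ∑ i, (β - cc • α) i • v i = 0 := by
    simp only [Pi.sub_apply, Pi.smul_apply, smul_eq_mul, sub_smul, mul_smul]
    rw [Finset.sum_sub_distrib, ← Finset.smul_sum, hβv, hαv, smul_zero, sub_zero]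
  have h00 := key (β - cc • α) hγs hγv hγne 0
  apply h00
  simp only [Pi.sub_apply, Pi.smul_apply, smul_eq_mul, hcc]
  rw [div_mul_cancel₀ _ (key α hαs hαv hα0 0), sub_self]
end

section
/- Let v_1, …, v_n be the vertices of a simplicial convex polytope Δ of dimension n−2 in ℝ^{n-2} containing 0 in its interior, and fix the (unique up to scale) relation Σ α_i v_i = 0 with Σ α_i = 0 and all α_i ≠ 0. Let I_+ = {i : α_i > 0} and I_− = {i : α_i < 0}. Then a set of n−2 of the vertices spans a facet of Δ if and only if of the two omitted indices, one lies in I_+ and the other lies in I_−. -/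
open Finset

set_option maxHeartbeats 1000000

/-- Auxiliary construction: from a linear functional on `ℝ × ℝ^d` vanishing on
`(1, v i)` for `i ∉ {j₁, j₂}` and negative at `(1, v j₁)`, `(1, v j₂)`, build the
supporting functional for the facet. -/
lemma stmt2_aux (d : ℕ) (v : Fin (d + 2) → (Fin d → ℝ)) (j₁ j₂ i₀ : Fin (d + 2))
    (hi₁ : i₀ ≠ j₁) (hi₂ : i₀ ≠ j₂)
    (g : (ℝ × (Fin d → ℝ)) →ₗ[ℝ] ℝ)
    (hg0 : ∀ i, i ≠ j₁ → i ≠ j₂ → g (1, v i) = 0)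
    (hA : g (1, v j₁) < 0) (hB : g (1, v j₂) < 0) :
    ∃ (f : (Fin d → ℝ) →ₗ[ℝ] ℝ) (c : ℝ), f ≠ 0 ∧ (∀ i, f (v i) ≤ c) ∧
        (∀ i, f (v i) = c ↔ (i ≠ j₁ ∧ i ≠ j₂)) := by
  set f := g.comp (LinearMap.inr ℝ ℝ (Fin d → ℝ)) with hf
  set c := -(g (1, 0)) with hc
  have key : ∀ i, f (v i) - c = g (1, v i) := by
    intro i
    have h1 : ((1 : ℝ), v i) = ((1 : ℝ), (0 : Fin d → ℝ)) + ((0 : ℝ), v i) := by simp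
    rw [h1, map_add, hf, hc]
    simp only [LinearMap.comp_apply, LinearMap.inr_apply]
    ring
  refine ⟨f, c, ?_, ?_, ?_⟩
  · -- f ≠ 0
    intro hf0
    have h1 := key i₀
    have h2 := key j₁
    rw [hf0] at h1 h2
    rw [hg0 i₀ hi₁ hi₂] at h1
    simp only [LinearMap.zero_apply, zero_sub] at h1 h2
    rw [← h2, h1] at hA
    exact lt_irrefl _ hA
  · -- ∀ i, f (v i) ≤ c
    intro i
    rw [← sub_nonpos, key i]
    by_cases h1 : i = j₁
    · subst h1; exact hA.le
    by_cases h2 : i = j₂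
    · subst h2; exact hB.le
    · rw [hg0 i h1 h2]
  · -- equality characterization
    intro i
    constructor
    · intro h
      have h0 : g (1, v i) = 0 := by rw [← key i, h, sub_self]
      constructor
      · rintro rfl; rw [h0] at hA; exact lt_irrefl _ hA
      · rintro rfl; rw [h0] at hB; exact lt_irrefl _ hB
    · rintro ⟨h1, h2⟩
      have h3 := key i
      rw [hg0 i h1 h2, sub_eq_zero] at h3
      exact h3

/-- Let `v 0, …, v (d+1)` (`n = d + 2`) be the vertices of a simplicial
convex polytope `Δ ⊆ ℝ^d` of dimension `d` containing `0` in its interior, and fix the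
relation `∑ α i • v i = 0`, `∑ α i = 0`, all `α i ≠ 0`.  A set of `n - 2` of the vertices
spans a facet of `Δ` iff of the two omitted indices one lies in `I₊ = {i : α i > 0}` and
the other in `I₋ = {i : α i < 0}`. -/
theorem stmt2 (d : ℕ) (v : Fin (d + 2) → (Fin d → ℝ))
    (hspan : Submodule.span ℝ (Set.range v) = ⊤)
    (hvert : ∀ i, v i ∉ convexHull ℝ (v '' {j | j ≠ i}))
    (h0 : (0 : Fin d → ℝ) ∈ interior (convexHull ℝ (Set.range v)))
    (hsimp : ∀ (f : (Fin d → ℝ) →ₗ[ℝ] ℝ) (c : ℝ), f ≠ 0 → (∀ i, f (v i) ≤ c) →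
      AffineIndependent ℝ (fun j : {i // f (v i) = c} => v j))
    (α : Fin (d + 2) → ℝ) (hα : ∀ i, α i ≠ 0)
    (hsum : ∑ i, α i = 0) (hrel : ∑ i, α i • v i = 0)
    (j₁ j₂ : Fin (d + 2)) (hj : j₁ ≠ j₂) :
    (∃ (f : (Fin d → ℝ) →ₗ[ℝ] ℝ) (c : ℝ), f ≠ 0 ∧ (∀ i, f (v i) ≤ c) ∧
        (∀ i, f (v i) = c ↔ (i ≠ j₁ ∧ i ≠ j₂))) ↔
      ((0 < α j₁ ∧ α j₂ < 0) ∨ (α j₁ < 0 ∧ 0 < α j₂)) := by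
  classical
  -- dispose of the degenerate case d = 0
  rcases Nat.eq_zero_or_pos d with hd | hd
  · exfalso
    subst hd
    apply hvert j₁
    apply subset_convexHull
    exact ⟨j₂, fun h => hj h.symm, Subsingleton.elim _ _⟩
  -- an index outside {j₁, j₂}
  obtain ⟨i₀, hi₀⟩ : ∃ i₀ : Fin (d + 2), i₀ ∉ ({j₁, j₂} : Finset (Fin (d + 2))) := by
    by_contra h
    push_neg at h
    have h1 : (Finset.univ : Finset (Fin (d + 2))).card ≤ ({j₁, j₂} : Finset _).card :=
      Finset.card_le_card fun i _ => h i
    rw [Finset.card_univ, Fintype.card_fin, Finset.card_pair hj] at h1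
    omega
  simp only [Finset.mem_insert, Finset.mem_singleton, not_or] at hi₀
  set w : Fin (d + 2) → ℝ × (Fin d → ℝ) := fun i => (1, v i) with hw
  have hrelw : ∑ i, α i • w i = 0 := by
    rw [Prod.ext_iff]
    constructor
    · simpa [hw, Prod.fst_sum] using hsum
    · simpa [hw, Prod.snd_sum] using hrel
  -- span of all the (1, v i) is everything
  have haff : affineSpan ℝ (Set.range v) = ⊤ := by
    rw [← interior_convexHull_nonempty_iff_affineSpan_eq_top]
    exact ⟨0, h0⟩
  have hvs : vectorSpan ℝ (Set.range v) = ⊤ := by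
    rw [← direction_affineSpan, haff, AffineSubspace.direction_top]
  have hdiff : ∀ y : Fin d → ℝ, ((0 : ℝ), y) ∈ Submodule.span ℝ (Set.range w) := by
    have key : vectorSpan ℝ (Set.range v) ≤
        (Submodule.span ℝ (Set.range w)).comap (LinearMap.inr ℝ ℝ (Fin d → ℝ)) := by
      rw [vectorSpan_def]
      apply Submodule.span_le.mpr
      rintro z ⟨x, ⟨i, rfl⟩, y, ⟨k, rfl⟩, rfl⟩
      simp only [SetLike.mem_coe, Submodule.mem_comap, LinearMap.inr_apply, vsub_eq_sub]
      have h1 : ((0 : ℝ), v i - v k) = w i - w k := by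
        simp [hw, Prod.ext_iff]
      rw [h1]
      exact sub_mem (Submodule.subset_span ⟨i, rfl⟩) (Submodule.subset_span ⟨k, rfl⟩)
    intro y
    have hy : y ∈ vectorSpan ℝ (Set.range v) := by rw [hvs]; trivial
    simpa using key hy
  have htop : Submodule.span ℝ (Set.range w) = ⊤ := by
    rw [eq_top_iff]
    rintro ⟨t, x⟩ -
    have h1 : w j₁ ∈ Submodule.span ℝ (Set.range w) := Submodule.subset_span ⟨j₁, rfl⟩
    have h2 := hdiff (x - t • v j₁)
    have h3 : (t, x) = t • w j₁ + ((0 : ℝ), x - t • v j₁) := by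
      simp [hw, Prod.ext_iff]
    rw [h3]
    exact add_mem (Submodule.smul_mem _ _ h1) h2
  -- span of all but one of the (1, v i) is still everything
  have hsub : ∀ k, Submodule.span ℝ (w '' {i | i ≠ k}) = ⊤ := by
    intro k
    have hk : w k ∈ Submodule.span ℝ (w '' {i | i ≠ k}) := by
      have h1 := hrelw
      rw [← Finset.add_sum_erase Finset.univ (fun i => α i • w i) (Finset.mem_univ k)] at h1
      have h2 : w k = (α k)⁻¹ • -∑ i ∈ Finset.univ.erase k, α i • w i := by
        rw [← eq_neg_of_add_eq_zero_left h1, smul_smul, inv_mul_cancel₀ (hα k), one_smul]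
      rw [h2]
      refine Submodule.smul_mem _ _ (Submodule.neg_mem _ (Submodule.sum_mem _ ?_))
      intro i hi
      exact Submodule.smul_mem _ _
        (Submodule.subset_span ⟨i, Finset.ne_of_mem_erase hi, rfl⟩)
    rw [eq_top_iff, ← htop]
    apply Submodule.span_le.mpr
    rintro _ ⟨i, rfl⟩
    by_cases hik : i = k
    · subst hik; exact hk
    · exact Submodule.subset_span ⟨i, hik, rfl⟩
  -- sums of terms vanishing off {j₁, j₂}
  have hsum2 : ∀ u : Fin (d + 2) → ℝ, (∀ i, i ≠ j₁ → i ≠ j₂ → u i = 0) →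
      ∑ i, α i * u i = α j₁ * u j₁ + α j₂ * u j₂ := by
    intro u hu
    rw [← Finset.sum_subset (Finset.subset_univ {j₁, j₂})]
    · rw [Finset.sum_pair hj]
    · intro i _ hi
      simp only [Finset.mem_insert, Finset.mem_singleton, not_or] at hi
      rw [hu i hi.1 hi.2, mul_zero]
  constructor
  · -- facet ⇒ opposite signs
    rintro ⟨f, c, hf0, hle, heq⟩
    have h1 : ∑ i, α i * f (v i) = 0 := by
      have h2 := congrArg f hrel
      rw [map_sum, map_zero] at h2
      simpa [smul_eq_mul] using h2
    have key0 : ∑ i, α i * (f (v i) - c) = 0 := by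
      have h3 : ∑ i, α i * (f (v i) - c) = ∑ i, α i * f (v i) - (∑ i, α i) * c := by
        rw [Finset.sum_mul, ← Finset.sum_sub_distrib]
        exact Finset.sum_congr rfl fun i _ => by ring
      rw [h3, h1, hsum, zero_mul, sub_zero]
    have hzero : ∀ i, i ≠ j₁ → i ≠ j₂ → f (v i) - c = 0 := fun i h1 h2 => by
      rw [(heq i).mpr ⟨h1, h2⟩, sub_self]
    have key1 := hsum2 (fun i => f (v i) - c) hzero
    rw [key0] at key1
    have ha : f (v j₁) - c < 0 :=
      sub_neg.mpr (lt_of_le_of_ne (hle j₁) fun h => ((heq j₁).mp h).1 rfl)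
    have hb : f (v j₂) - c < 0 :=
      sub_neg.mpr (lt_of_le_of_ne (hle j₂) fun h => ((heq j₂).mp h).2 rfl)
    rcases (hα j₁).lt_or_gt with h1' | h1'
    · right
      refine ⟨h1', ?_⟩
      rcases (hα j₂).lt_or_gt with h2' | h2'
      · exfalso; nlinarith
      · exact h2'
    · left
      refine ⟨h1', ?_⟩
      rcases (hα j₂).lt_or_gt with h2' | h2'
      · exact h2'
      · exfalso; nlinarith
  · -- opposite signs ⇒ facet
    intro hsign
    -- a nonzero functional vanishing on the w i, i ∉ {j₁, j₂}
    set s : Finset (ℝ × (Fin d → ℝ)) := ((Finset.univ.erase j₁).erase j₂).image w with hs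
    have hcard : s.card ≤ d := by
      have h1 : ((Finset.univ.erase j₁).erase j₂).card = d := by
        rw [Finset.card_erase_of_mem (Finset.mem_erase.mpr ⟨fun h => hj h.symm,
          Finset.mem_univ _⟩), Finset.card_erase_of_mem (Finset.mem_univ _),
          Finset.card_univ, Fintype.card_fin]
        omega
      exact le_trans Finset.card_image_le (le_of_eq h1)
    have hWlt : Submodule.span ℝ (s : Set (ℝ × (Fin d → ℝ))) < ⊤ := by
      apply span_lt_top_of_card_lt_finrank
      rw [Finset.toFinset_coe]
      have h2 : Module.finrank ℝ (ℝ × (Fin d → ℝ)) = 1 + d := by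
        rw [Module.finrank_prod, Module.finrank_self, Module.finrank_fin_fun]
      omega
    obtain ⟨g, hg, hmap⟩ :=
      Submodule.exists_dual_map_eq_bot_of_lt_top hWlt inferInstance
    have hg0 : ∀ i, i ≠ j₁ → i ≠ j₂ → g (w i) = 0 := by
      intro i h1 h2
      have hmem : w i ∈ Submodule.span ℝ (s : Set (ℝ × (Fin d → ℝ))) := by
        apply Submodule.subset_span
        simp only [hs, Finset.coe_image, Set.mem_image, Finset.mem_coe]
        exact ⟨i, by simp [Finset.mem_erase, h1, h2], rfl⟩
      have h3 : g (w i) ∈ Submodule.map g (Submodule.span ℝ (s : Set (ℝ × (Fin d → ℝ)))) :=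
        ⟨w i, hmem, rfl⟩
      rw [hmap] at h3
      simpa using h3
    have hvan : ∀ k, (∀ i, i ≠ k → g (w i) = 0) → g = 0 := by
      intro k h
      have h1 : Submodule.span ℝ (w '' {i | i ≠ k}) ≤ LinearMap.ker g := by
        apply Submodule.span_le.mpr
        rintro _ ⟨i, hi, rfl⟩
        exact h i hi
      rw [hsub k] at h1
      exact LinearMap.ker_eq_top.mp (top_unique h1)
    have hA : g (w j₁) ≠ 0 := by
      intro h
      refine hg (hvan j₂ fun i hi => ?_)
      by_cases hij : i = j₁
      · subst hij; exact h
      · exact hg0 i hij hi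
    have hB : g (w j₂) ≠ 0 := by
      intro h
      refine hg (hvan j₁ fun i hi => ?_)
      by_cases hij : i = j₂
      · subst hij; exact h
      · exact hg0 i hi hij
    have hABsum : α j₁ * g (w j₁) + α j₂ * g (w j₂) = 0 := by
      rw [← hsum2 (fun i => g (w i)) hg0]
      have h1 : ∑ i, α i * g (w i) = g (∑ i, α i • w i) := by
        rw [map_sum]
        exact Finset.sum_congr rfl fun i _ => by rw [map_smul, smul_eq_mul]
      rw [h1, hrelw, map_zero]
    rcases hA.lt_or_gt with hA' | hA'
    · have hB' : g (w j₂) < 0 := by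
        rcases hB.lt_or_gt with h4 | h4
        · exact h4
        · exfalso
          rcases hsign with ⟨h1, h2⟩ | ⟨h1, h2⟩ <;> nlinarith
      exact stmt2_aux d v j₁ j₂ i₀ hi₀.1 hi₀.2 g hg0 hA' hB'
    · have hB' : 0 < g (w j₂) := by
        rcases hB.lt_or_gt with h4 | h4
        · exfalso
          rcases hsign with ⟨h1, h2⟩ | ⟨h1, h2⟩ <;> nlinarith
        · exact h4
      refine stmt2_aux d v j₁ j₂ i₀ hi₀.1 hi₀.2 (-g) ?_ ?_ ?_
      · intro i h1 h2
        simp only [LinearMap.neg_apply]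
        rw [hg0 i h1 h2, neg_zero]
      · simpa using hA'
      · simpa using hB'
end

section
/- Let n ≥ 3 and let I, J be disjoint nonempty subsets of ℤ/nℤ. Place the points 1,…,n clockwise on a circle in convex position (i.e., let v_1,…,v_n be the vertices of a convex n-gon listed clockwise). Then the relative interiors of ConvexHull({v_i : i ∈ I}) and ConvexHull({v_j : j ∈ J}) intersect if and only if there exist indices i_1, i_2 ∈ I and j_1, j_2 ∈ J such that i_1, j_1, i_2, j_2 occur in clockwise cyclic order. -/
open Finset

/-- Four indices `a b c d` of `Fin n` occur in (clockwise) cyclic order. -/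
def CyclicOrder4 {n : ℕ} (a b c d : Fin n) : Prop :=
  (a < b ∧ b < c ∧ c < d) ∨ (b < c ∧ c < d ∧ d < a) ∨
  (c < d ∧ d < a ∧ a < b) ∨ (d < a ∧ a < b ∧ b < c)


lemma cross_lemma (pa pb pc pd : ℝ × ℝ)
    (h1 : (pb.1 - pa.1) * (pc.2 - pa.2) - (pb.2 - pa.2) * (pc.1 - pa.1) < 0)
    (h2 : (pc.1 - pa.1) * (pd.2 - pa.2) - (pc.2 - pa.2) * (pd.1 - pa.1) < 0)
    (h3 : (pb.1 - pa.1) * (pd.2 - pa.2) - (pb.2 - pa.2) * (pd.1 - pa.1) < 0)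
    (h4 : (pc.1 - pb.1) * (pd.2 - pb.2) - (pc.2 - pb.2) * (pd.1 - pb.1) < 0) :
    ∃ s t : ℝ, 0 < s ∧ s < 1 ∧ 0 < t ∧ t < 1 ∧
      (1 - s) • pa + s • pc = (1 - t) • pb + t • pd := by
  set fb : ℝ := (pb.1 - pa.1) * (pc.2 - pa.2) - (pb.2 - pa.2) * (pc.1 - pa.1) with hfb_def
  set fd : ℝ := (pd.1 - pa.1) * (pc.2 - pa.2) - (pd.2 - pa.2) * (pc.1 - pa.1) with hfd_def
  set ga : ℝ := (pa.1 - pb.1) * (pd.2 - pb.2) - (pa.2 - pb.2) * (pd.1 - pb.1) with hga_def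
  set gc : ℝ := (pc.1 - pb.1) * (pd.2 - pb.2) - (pc.2 - pb.2) * (pd.1 - pb.1) with hgc_def
  have hfb : fb < 0 := h1
  have hfd : 0 < fd := by
    have e : fd = -((pc.1 - pa.1) * (pd.2 - pa.2) - (pc.2 - pa.2) * (pd.1 - pa.1)) := by
      rw [hfd_def]; ring
    linarith [h2, e.ge, e.le]
  have hga : 0 < ga := by
    have e : ga = -((pb.1 - pa.1) * (pd.2 - pa.2) - (pb.2 - pa.2) * (pd.1 - pa.1)) := by
      rw [hga_def]; ring
    linarith [h3, e.ge, e.le]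
  have hgc : gc < 0 := h4
  have hden1 : ga - gc > 0 := by linarith
  have hden2 : fb - fd < 0 := by linarith
  refine ⟨ga / (ga - gc), fb / (fb - fd), div_pos hga hden1,
    (div_lt_one hden1).2 (by linarith), ?_, ?_, ?_⟩
  · have e : fb / (fb - fd) = (-fb) / (fd - fb) := by
      rw [← neg_div_neg_eq]; ring_nf
    rw [e]
    exact div_pos (by linarith) (by linarith)
  · have e : fb / (fb - fd) = (-fb) / (fd - fb) := by
      rw [← neg_div_neg_eq]; ring_nf
    rw [e]
    exact (div_lt_one (by linarith)).2 (by linarith)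
  · have hne1 : ga - gc ≠ 0 := ne_of_gt hden1
    have hne2 : fb - fd ≠ 0 := ne_of_lt hden2
    clear_value fb fd ga gc
    have e1 : ∀ z w : ℝ, (1 - ga/(ga-gc))*z + ga/(ga-gc)*w = (ga*w - gc*z)/(ga-gc) := by
      intro z w; field_simp; ring
    have e2 : ∀ z w : ℝ, (1 - fb/(fb-fd))*z + fb/(fb-fd)*w = (fb*w - fd*z)/(fb-fd) := by
      intro z w; field_simp; ring
    refine Prod.ext ?_ ?_ <;>
      simp only [Prod.fst_add, Prod.snd_add, Prod.smul_fst, Prod.smul_snd, smul_eq_mul] <;>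
      (rw [e1, e2, div_eq_div_iff hne1 hne2]; subst hfb_def hfd_def hga_def hgc_def; ring)



set_option maxHeartbeats 1000000 in
lemma posCombo_mem_intrinsicInterior {n : ℕ} (v : Fin n → ℝ × ℝ)
    (S : Finset (Fin n)) (w : Fin n → ℝ) (hw : ∀ i ∈ S, 0 < w i)
    (hw1 : ∑ i ∈ S, w i = 1) :
    (∑ i ∈ S, w i • v i) ∈ intrinsicInterior ℝ (convexHull ℝ (v '' ↑S)) := by
  classical
  set p : ℝ × ℝ := ∑ i ∈ S, w i • v i with hp
  have hSne : S.Nonempty := by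
    by_contra h
    rw [not_nonempty_iff_eq_empty] at h
    simp [h] at hw1
  have hmem : ∀ (u : Fin n → ℝ), (∀ i ∈ S, 0 ≤ u i) → (∑ i ∈ S, u i = 1) →
      (∑ i ∈ S, u i • v i) ∈ convexHull ℝ (v '' ↑S) := by
    intro u hu hu1
    have := Finset.centerMass_mem_convexHull S hu (by rw [hu1]; norm_num)
      (fun i hi => Set.mem_image_of_mem v hi)
    rwa [Finset.centerMass, hu1, inv_one, one_smul] at this
  have hpmem : p ∈ convexHull ℝ (v '' ↑S) := hmem w (fun i hi => (hw i hi).le) hw1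
  have hpspan : p ∈ affineSpan ℝ (v '' ↑S) := convexHull_subset_affineSpan _ hpmem
  let T : (Fin n → ℝ) →ₗ[ℝ] ℝ × ℝ :=
    { toFun := fun c => ∑ i ∈ S, c i • (v i - p)
      map_add' := by intro a b; simp [add_smul, Finset.sum_add_distrib]
      map_smul' := by intro r a; simp [Finset.smul_sum, smul_smul] }
  have hTapp : ∀ c : Fin n → ℝ, T c = ∑ i ∈ S, c i • (v i - p) := fun _ => rfl
  have hTsingle : ∀ i ∈ S, T (Pi.single i (1:ℝ)) = v i - p := by
    intro i hi
    rw [hTapp, Finset.sum_eq_single_of_mem i hi]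
    · simp
    · intro k _ hk
      rw [Pi.single_eq_of_ne hk]; simp
  have hrange : ∀ q : ℝ × ℝ, q ∈ affineSpan ℝ (v '' ↑S) → q - p ∈ LinearMap.range T := by
    intro q hq
    have hd : q - p ∈ (affineSpan ℝ (v '' ↑S)).direction :=
      AffineSubspace.vsub_mem_direction hq hpspan
    rw [direction_affineSpan, vectorSpan_def] at hd
    refine Submodule.span_le.2 ?_ hd
    rintro u ⟨x, hx, y, hy, rfl⟩
    obtain ⟨i, hi, rfl⟩ := hx
    obtain ⟨j, hj, rfl⟩ := hy
    refine ⟨Pi.single i 1 - Pi.single j 1, ?_⟩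
    rw [map_sub, hTsingle i hi, hTsingle j hj]
    simp [vsub_eq_sub]
  obtain ⟨g, hg⟩ := LinearMap.exists_rightInverse_of_surjective T.rangeRestrict
    (LinearMap.range_rangeRestrict T)
  let L := LinearMap.toContinuousLinearMap g
  set M : ℝ := ‖L‖ with hM
  have hM0 : 0 ≤ M := norm_nonneg L
  obtain ⟨i₀, hi₀, hmin⟩ := S.exists_min_image w hSne
  set m : ℝ := w i₀ with hm
  have hm0 : 0 < m := hw i₀ hi₀
  set d : ℝ := m / ((n:ℝ) + 2) with hd
  have hd0 : 0 < d := by positivity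
  have hdm : (n:ℝ) * d + 2 * d = m := by rw [hd]; field_simp
  set ε : ℝ := d / (M + 1) with hε
  have hε0 : 0 < ε := by positivity
  have key : ∀ q : ℝ × ℝ, q ∈ affineSpan ℝ (v '' ↑S) → ‖q - p‖ < ε →
      q ∈ convexHull ℝ (v '' ↑S) := by
    intro q hq hqε
    set u : ↥(LinearMap.range T) := ⟨q - p, hrange q hq⟩ with hu
    set c : Fin n → ℝ := g u with hc
    have hTc : T c = q - p := by
      have h := LinearMap.congr_fun hg u
      have h2 := congrArg Subtype.val h
      simpa using h2
    have hcb : ‖c‖ ≤ M * ‖q - p‖ := by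
      have h := L.le_opNorm u
      have : ‖(u : ℝ × ℝ)‖ = ‖q - p‖ := rfl
      exact h
    have hcsmall : ‖c‖ < d := by
      have h1 : M * ‖q - p‖ ≤ M * ε := by nlinarith [norm_nonneg (q - p)]
      have h2 : M * ε < (M + 1) * ε := by nlinarith
      have h3 : (M + 1) * ε = d := by rw [hε]; field_simp
      linarith
    have hci : ∀ i, |c i| < d :=
      fun i => lt_of_le_of_lt (by simpa using norm_le_pi_norm c i) hcsmall
    set σ : ℝ := ∑ i ∈ S, c i with hσ
    have hσb : |σ| ≤ (n : ℝ) * d := by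
      calc |σ| ≤ ∑ i ∈ S, |c i| := Finset.abs_sum_le_sum_abs _ _
        _ ≤ ∑ _i ∈ S, d := Finset.sum_le_sum (fun i _ => (hci i).le)
        _ = S.card * d := by rw [Finset.sum_const, nsmul_eq_mul]
        _ ≤ (n : ℝ) * d := by
            have h : (S.card : ℝ) ≤ (n : ℝ) := by
              exact_mod_cast le_trans (Finset.card_le_univ S) (by simp)
            nlinarith
    have hwle1 : ∀ i ∈ S, w i ≤ 1 := by
      intro i hi
      rw [← hw1]
      exact Finset.single_le_sum (fun j hj => (hw j hj).le) hi
    have hu'pos : ∀ i ∈ S, 0 < (1 - σ) * w i + c i := by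
      intro i hi
      have f1 : σ * w i ≤ |σ| := by
        calc σ * w i ≤ |σ * w i| := le_abs_self _
          _ = |σ| * |w i| := abs_mul _ _
          _ ≤ |σ| * 1 := by
              have : |w i| ≤ 1 := abs_le.2 ⟨by linarith [hw i hi], hwle1 i hi⟩
              nlinarith [abs_nonneg σ]
          _ = |σ| := mul_one _
      have f3 : -d < c i := (abs_lt.1 (hci i)).1
      have f4 : m ≤ w i := hmin i hi
      have e : (1 - σ) * w i = w i - σ * w i := by ring
      rw [e]
      linarith
    have hu'1 : ∑ i ∈ S, ((1 - σ) * w i + c i) = 1 := by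
      rw [Finset.sum_add_distrib, ← Finset.mul_sum, hw1, ← hσ]; ring
    have e2 : ∑ i ∈ S, ((1 - σ) * w i + c i) • v i = (1 - σ) • p + ∑ i ∈ S, c i • v i := by
      rw [Finset.sum_congr rfl (fun i (_ : i ∈ S) => add_smul ((1-σ) * w i) (c i) (v i)),
        Finset.sum_add_distrib]
      congr 1
      rw [hp, Finset.smul_sum]
      exact Finset.sum_congr rfl (fun i _ => (smul_smul _ _ _).symm)
    have e3 : T c = (∑ i ∈ S, c i • v i) - σ • p := by
      rw [hTapp,
        Finset.sum_congr rfl (fun i (_ : i ∈ S) => smul_sub (c i) (v i) p),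
        Finset.sum_sub_distrib, hσ, Finset.sum_smul]
    have hqsum : q = ∑ i ∈ S, ((1 - σ) * w i + c i) • v i := by
      have h1 : q = p + T c := by rw [hTc]; abel
      rw [h1, e3, e2, sub_smul, one_smul]
      abel
    rw [hqsum]
    exact hmem (fun i => (1 - σ) * w i + c i) (fun i hi => (hu'pos i hi).le) hu'1
  -- conclude intrinsic interior membership
  have hspan_eq : affineSpan ℝ (convexHull ℝ (v '' ↑S)) = affineSpan ℝ (v '' ↑S) :=
    affineSpan_convexHull _
  have hpspan' : p ∈ affineSpan ℝ (convexHull ℝ (v '' ↑S)) := by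
    rw [hspan_eq]; exact hpspan
  refine ⟨⟨p, hpspan'⟩, ?_, rfl⟩
  rw [mem_interior_iff_mem_nhds]
  have hopen : IsOpen ((Subtype.val) ⁻¹' (Metric.ball p ε) :
      Set (affineSpan ℝ (convexHull ℝ (v '' ↑S)))) :=
    Metric.isOpen_ball.preimage continuous_subtype_val
  refine Filter.mem_of_superset (hopen.mem_nhds ?_) ?_
  · exact Metric.mem_ball_self hε0
  · rintro ⟨x, hx⟩ hxball
    have hx' : x ∈ affineSpan ℝ (v '' ↑S) := by rw [← hspan_eq]; exact hx
    have hdist : ‖x - p‖ < ε := by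
      have : dist x p < ε := hxball
      rwa [dist_eq_norm] at this
    exact key x hx' hdist



/-- hulls on opposite sides of a line are disjoint -/
lemma disjoint_hulls {n : ℕ} (v : Fin n → ℝ × ℝ) (A B C : ℝ) (S T : Finset (Fin n))
    (hS : ∀ i ∈ S, A * (v i).1 + B * (v i).2 < C)
    (hT : ∀ j ∈ T, C ≤ A * (v j).1 + B * (v j).2) :
    Disjoint (convexHull ℝ (v '' ↑S)) (convexHull ℝ (v '' ↑T)) := by
  have hlin : IsLinearMap ℝ (fun p : ℝ × ℝ => A * p.1 + B * p.2) := by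
    constructor
    · intro x y; simp; ring
    · intro c x; simp [smul_eq_mul]; ring
  have h1 : convexHull ℝ (v '' ↑S) ⊆ {p : ℝ × ℝ | A * p.1 + B * p.2 < C} :=
    convexHull_min (by rintro _ ⟨i, hi, rfl⟩; exact hS i hi) (convex_halfSpace_lt hlin C)
  have h2 : convexHull ℝ (v '' ↑T) ⊆ {p : ℝ × ℝ | C ≤ A * p.1 + B * p.2} :=
    convexHull_min (by rintro _ ⟨j, hj, rfl⟩; exact hT j hj) (convex_halfSpace_ge hlin C)
  refine Set.disjoint_left.2 fun p hp1 hp2 => ?_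
  have := h1 hp1
  have := h2 hp2
  simp only [Set.mem_setOf_eq] at *
  linarith

section
variable {n : ℕ} {v : Fin n → ℝ × ℝ}
  (hconv : ∀ i j k : Fin n, i < j → j < k →
      ((v j).1 - (v i).1) * ((v k).2 - (v i).2) -
        ((v j).2 - (v i).2) * ((v k).1 - (v i).1) < 0)

/-- the affine functional of the chord a-b -/
noncomputable def Fc (v : Fin n → ℝ × ℝ) (a b : Fin n) (p : ℝ × ℝ) : ℝ :=
  (p.1 - (v a).1) * ((v b).2 - (v a).2) - (p.2 - (v a).2) * ((v b).1 - (v a).1)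

include hconv

lemma Fc_mid {a b k : Fin n} (h1 : a < k) (h2 : k < b) : Fc v a b (v k) < 0 :=
  hconv a k b h1 h2

lemma Fc_left {a b k : Fin n} (h1 : k < a) (h2 : a < b) : 0 < Fc v a b (v k) := by
  have h := hconv k a b h1 h2
  have e : Fc v a b (v k) =
      -(((v a).1 - (v k).1) * ((v b).2 - (v k).2) -
        ((v a).2 - (v k).2) * ((v b).1 - (v k).1)) := by
    unfold Fc; ring
  linarith [e.le, e.ge]

lemma Fc_right {a b k : Fin n} (h1 : a < b) (h2 : b < k) : 0 < Fc v a b (v k) := by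
  have h := hconv a b k h1 h2
  have e : Fc v a b (v k) =
      -(((v b).1 - (v a).1) * ((v k).2 - (v a).2) -
        ((v b).2 - (v a).2) * ((v k).1 - (v a).1)) := by
    unfold Fc; ring
  linarith [e.le, e.ge]

omit hconv in
lemma Fc_self_left (a b : Fin n) : Fc v a b (v a) = 0 := by unfold Fc; ring

omit hconv in
lemma Fc_self_right (a b : Fin n) : Fc v a b (v b) = 0 := by unfold Fc; ring

omit hconv in
lemma Fc_eq (a b : Fin n) (p : ℝ × ℝ) :
    Fc v a b p = ((v b).2 - (v a).2) * p.1 + (-((v b).1 - (v a).1)) * p.2 -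
      (((v b).2 - (v a).2) * (v a).1 + (-((v b).1 - (v a).1)) * (v a).2) := by
  unfold Fc; ring

/-- injectivity of the vertices -/
lemma v_inj_aux (hn : 3 ≤ n) {i j : Fin n} (hij : i < j) (he : v i = v j) : False := by
  have hex : ∃ k : Fin n, k ≠ i ∧ k ≠ j := by
    by_contra h
    push_neg at h
    have hsub : (univ : Finset (Fin n)) ⊆ {i, j} := by
      intro k _
      rcases eq_or_ne k i with rfl | hk
      · simp
      · simp [h k hk]
    have h1 := Finset.card_le_card hsub
    have h2 : ({i, j} : Finset (Fin n)).card ≤ 2 :=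
      le_trans (Finset.card_insert_le _ _) (by simp)
    rw [Finset.card_univ, Fintype.card_fin] at h1
    omega
  obtain ⟨k, hki, hkj⟩ := hex
  rcases lt_trichotomy k i with hk | hk | hk
  · have h := hconv k i j hk hij
    rw [he] at h
    have e : ((v j).1 - (v k).1) * ((v j).2 - (v k).2) -
        ((v j).2 - (v k).2) * ((v j).1 - (v k).1) = 0 := by ring
    linarith
  · exact hki hk
  · rcases lt_trichotomy k j with hk2 | hk2 | hk2
    · have h := hconv i k j hk hk2
      rw [he] at h
      have e : ((v k).1 - (v j).1) * ((v j).2 - (v j).2) -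
          ((v k).2 - (v j).2) * ((v j).1 - (v j).1) = 0 := by ring
      linarith
    · exact hkj hk2
    · have h := hconv i j k hij hk2
      rw [he] at h
      have e : ((v j).1 - (v j).1) * ((v k).2 - (v j).2) -
          ((v j).2 - (v j).2) * ((v k).1 - (v j).1) = 0 := by ring
      linarith

lemma v_inj (hn : 3 ≤ n) : Function.Injective v := by
  intro i j he
  by_contra hne
  rcases Ne.lt_or_gt hne with h | h
  · exact v_inj_aux hconv hn h he
  · exact v_inj_aux hconv hn h he.symm

/-- separation: if every element of S lies outside the index-range of T, the hulls
are disjoint -/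
lemma sep_core (hn : 3 ≤ n) (S T : Finset (Fin n)) (hS : S.Nonempty) (hT : T.Nonempty)
    (hd : Disjoint S T)
    (hout : ∀ i ∈ S, i < T.min' hT ∨ T.max' hT < i) :
    Disjoint (convexHull ℝ (v '' ↑S)) (convexHull ℝ (v '' ↑T)) := by
  classical
  set a := T.min' hT with ha
  set b := T.max' hT with hb
  rcases lt_or_eq_of_le (T.min'_le b (T.max'_mem hT)) with hab | hab
  · -- chord of T separates
    refine disjoint_hulls v (-((v b).2 - (v a).2)) (-(-((v b).1 - (v a).1)))
      (-(((v b).2 - (v a).2) * (v a).1 + (-((v b).1 - (v a).1)) * (v a).2)) S T ?_ ?_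
    · intro i hi
      have hFc : 0 < Fc v a b (v i) := by
        rcases hout i hi with h | h
        · exact Fc_left hconv h hab
        · exact Fc_right hconv hab h
      rw [Fc_eq] at hFc
      linarith
    · intro j hj
      have hFc : Fc v a b (v j) ≤ 0 := by
        have h1 : a ≤ j := T.min'_le j hj
        have h2 : j ≤ b := T.le_max' j hj
        rcases lt_or_eq_of_le h1 with h1 | h1
        · rcases lt_or_eq_of_le h2 with h2 | h2
          · exact le_of_lt (Fc_mid hconv h1 h2)
          · rw [h2]; rw [Fc_self_right]
        · rw [← h1]; rw [Fc_self_left]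
      rw [Fc_eq] at hFc
      linarith
  · -- T is a singleton {t₀}
    set t₀ := a with ht₀
    have hTt : ∀ j ∈ T, j = t₀ := by
      intro j hj
      have h1 : a ≤ j := T.min'_le j hj
      have h2 : j ≤ b := T.le_max' j hj
      rw [← hab] at h2
      exact le_antisymm h2 h1
    have ht₀T : t₀ ∈ T := T.min'_mem hT
    by_cases hexl : ∃ s ∈ S, s < t₀
    · by_cases hexr : ∃ s ∈ S, t₀ < s
      · -- t₀ strictly inside the range of S: use neighbours in S
        set Sl := S.filter (fun s => s < t₀) with hSl
        set Sr := S.filter (fun s => t₀ < s) with hSr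
        have hSlne : Sl.Nonempty := by
          obtain ⟨s, hs, hs'⟩ := hexl; exact ⟨s, by simp [hSl, hs, hs']⟩
        have hSrne : Sr.Nonempty := by
          obtain ⟨s, hs, hs'⟩ := hexr; exact ⟨s, by simp [hSr, hs, hs']⟩
        set al := Sl.max' hSlne with hal
        set br := Sr.min' hSrne with hbr
        have halS : al ∈ S := (Finset.mem_filter.1 (Sl.max'_mem hSlne)).1
        have hbrS : br ∈ S := (Finset.mem_filter.1 (Sr.min'_mem hSrne)).1
        have hal_lt : al < t₀ := (Finset.mem_filter.1 (Sl.max'_mem hSlne)).2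
        have hbr_gt : t₀ < br := (Finset.mem_filter.1 (Sr.min'_mem hSrne)).2
        have halbr : al < br := lt_trans hal_lt hbr_gt
        refine (disjoint_hulls v (((v br).2 - (v al).2)) ((-((v br).1 - (v al).1)))
          ((((v br).2 - (v al).2) * (v al).1 + (-((v br).1 - (v al).1)) * (v al).2))
          T S ?_ ?_).symm
        · intro j hj
          rw [hTt j hj]
          have hFc : Fc v al br (v t₀) < 0 := Fc_mid hconv hal_lt hbr_gt
          rw [Fc_eq] at hFc
          linarith
        · intro s hs
          have hFc : 0 ≤ Fc v al br (v s) := by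
            have hst : s ≠ t₀ := fun h => (Finset.disjoint_left.1 hd hs) (h ▸ ht₀T)
            rcases lt_or_gt_of_ne hst with h | h
            · -- s < t₀ so s ≤ al
              have hsl : s ≤ al := Sl.le_max' s (by simp [hSl, hs, h])
              rcases lt_or_eq_of_le hsl with h2 | h2
              · exact le_of_lt (Fc_left hconv h2 halbr)
              · rw [h2, Fc_self_left]
            · have hsr : br ≤ s := Sr.min'_le s (by simp [hSr, hs, h])
              rcases lt_or_eq_of_le hsr with h2 | h2
              · exact le_of_lt (Fc_right hconv halbr h2)
              · rw [← h2, Fc_self_right]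
          rw [Fc_eq] at hFc
          linarith
      · -- all of S is < t₀ (no element above)
        push_neg at hexr
        have hSlt : ∀ s ∈ S, s < t₀ := by
          intro s hs
          rcases lt_or_eq_of_le (hexr s hs) with h | h
          · exact h
          · exact absurd (h ▸ ht₀T) (Finset.disjoint_left.1 hd hs)
        set a' := S.min' hS with ha'
        set b' := S.max' hS with hb'
        rcases lt_or_eq_of_le (S.min'_le b' (S.max'_mem hS)) with hab' | hab'
        · refine disjoint_hulls v (-((v b').2 - (v a').2)) (-(-((v b').1 - (v a').1)))
            (-(((v b').2 - (v a').2) * (v a').1 + (-((v b').1 - (v a').1)) * (v a').2))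
            T S ?_ ?_ |>.symm
          · intro j hj
            rw [hTt j hj]
            have hFc : 0 < Fc v a' b' (v t₀) :=
              Fc_right hconv hab' (hSlt _ (S.max'_mem hS))
            rw [Fc_eq] at hFc
            linarith
          · intro s hs
            have hFc : Fc v a' b' (v s) ≤ 0 := by
              have h1 : a' ≤ s := S.min'_le s hs
              have h2 : s ≤ b' := S.le_max' s hs
              rcases lt_or_eq_of_le h1 with h1 | h1
              · rcases lt_or_eq_of_le h2 with h2 | h2
                · exact le_of_lt (Fc_mid hconv h1 h2)
                · rw [h2, Fc_self_right]
              · rw [← h1, Fc_self_left]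
            rw [Fc_eq] at hFc
            linarith
        · -- S is also a singleton
          have hSs : ∀ s ∈ S, s = a' := by
            intro s hs
            have h2 : s ≤ b' := S.le_max' s hs
            have hab'' : a' = b' := hab'
            rw [← hab''] at h2
            exact le_antisymm h2 (S.min'_le s hs)
          have hvne : v a' ≠ v t₀ := by
            intro h
            have heq : a' = t₀ := v_inj hconv hn h
            exact Finset.disjoint_left.1 hd (S.min'_mem hS) (by rw [← heq] at ht₀T; exact ht₀T)
          have hSeq : (v '' ↑S) = {v a'} := by
            apply Set.eq_singleton_iff_unique_mem.2
            constructor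
            · exact ⟨a', S.min'_mem hS, rfl⟩
            · rintro _ ⟨s, hs, rfl⟩; rw [hSs s hs]
          have hTeq : (v '' ↑T) = {v t₀} := by
            apply Set.eq_singleton_iff_unique_mem.2
            constructor
            · exact ⟨t₀, ht₀T, rfl⟩
            · rintro _ ⟨s, hs, rfl⟩; rw [hTt s hs]
          rw [hSeq, hTeq, convexHull_singleton, convexHull_singleton]
          simp [hvne]
    · -- all of S is > t₀
      push_neg at hexl
      have hSgt : ∀ s ∈ S, t₀ < s := by
        intro s hs
        rcases lt_or_eq_of_le (hexl s hs) with h | h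
        · exact h
        · exact absurd (h.symm ▸ ht₀T) (Finset.disjoint_left.1 hd hs)
      set a' := S.min' hS with ha'
      set b' := S.max' hS with hb'
      rcases lt_or_eq_of_le (S.min'_le b' (S.max'_mem hS)) with hab' | hab'
      · refine disjoint_hulls v (-((v b').2 - (v a').2)) (-(-((v b').1 - (v a').1)))
          (-(((v b').2 - (v a').2) * (v a').1 + (-((v b').1 - (v a').1)) * (v a').2))
          T S ?_ ?_ |>.symm
        · intro j hj
          rw [hTt j hj]
          have hFc : 0 < Fc v a' b' (v t₀) :=
            Fc_left hconv (hSgt _ (S.min'_mem hS)) hab'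
          rw [Fc_eq] at hFc
          linarith
        · intro s hs
          have hFc : Fc v a' b' (v s) ≤ 0 := by
            have h1 : a' ≤ s := S.min'_le s hs
            have h2 : s ≤ b' := S.le_max' s hs
            rcases lt_or_eq_of_le h1 with h1 | h1
            · rcases lt_or_eq_of_le h2 with h2 | h2
              · exact le_of_lt (Fc_mid hconv h1 h2)
              · rw [h2, Fc_self_right]
            · rw [← h1, Fc_self_left]
          rw [Fc_eq] at hFc
          linarith
      · have hSs : ∀ s ∈ S, s = a' := by
          intro s hs
          have h2 : s ≤ b' := S.le_max' s hs
          have hab'' : a' = b' := hab'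
          rw [← hab''] at h2
          exact le_antisymm h2 (S.min'_le s hs)
        have hvne : v a' ≠ v t₀ := by
          intro h
          have heq : a' = t₀ := v_inj hconv hn h
          exact Finset.disjoint_left.1 hd (S.min'_mem hS) (by rw [← heq] at ht₀T; exact ht₀T)
        have hSeq : (v '' ↑S) = {v a'} := by
          apply Set.eq_singleton_iff_unique_mem.2
          exact ⟨⟨a', S.min'_mem hS, rfl⟩, by rintro _ ⟨s, hs, rfl⟩; rw [hSs s hs]⟩
        have hTeq : (v '' ↑T) = {v t₀} := by
          apply Set.eq_singleton_iff_unique_mem.2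
          exact ⟨⟨t₀, ht₀T, rfl⟩, by rintro _ ⟨s, hs, rfl⟩; rw [hTt s hs]⟩
        rw [hSeq, hTeq, convexHull_singleton, convexHull_singleton]
        simp [hvne]

end

section
variable {n : ℕ} {v : Fin n → ℝ × ℝ}
  (hconv : ∀ i j k : Fin n, i < j → j < k →
      ((v j).1 - (v i).1) * ((v k).2 - (v i).2) -
        ((v j).2 - (v i).2) * ((v k).1 - (v i).1) < 0)

include hconv

/-- interleaved chords cross -/
lemma cross_idx {a b c d : Fin n} (hab : a < b) (hbc : b < c) (hcd : c < d) :
    ∃ s t : ℝ, 0 < s ∧ s < 1 ∧ 0 < t ∧ t < 1 ∧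
      (1 - s) • v a + s • v c = (1 - t) • v b + t • v d :=
  cross_lemma (v a) (v b) (v c) (v d)
    (hconv a b c hab hbc) (hconv a c d (hab.trans hbc) hcd)
    (hconv a b d hab (hbc.trans hcd)) (hconv b c d hbc hcd)

omit hconv

/-- weight function for a pair of indices -/
lemma pairW (v : Fin n → ℝ × ℝ) {a c : Fin n} (hac : a ≠ c) {s : ℝ} (h0 : 0 < s) (h1 : s < 1) :
    ∃ w : Fin n → ℝ, (∀ t, 0 ≤ w t) ∧ (∀ t, w t ≠ 0 → t = a ∨ t = c) ∧
      (∑ t, w t = 1) ∧ 0 < w a ∧ 0 < w c ∧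
      (∑ t, w t • v t = (1 - s) • v a + s • v c) := by
  classical
  refine ⟨fun t => (if t = a then 1 - s else 0) + (if t = c then s else 0),
    ?_, ?_, ?_, ?_, ?_, ?_⟩
  · intro t; dsimp only; split_ifs <;> linarith
  · intro t ht
    by_contra hcon
    push_neg at hcon
    simp [hcon.1, hcon.2] at ht
  · rw [Finset.sum_add_distrib]
    simp [Finset.sum_ite_eq']
  · simp [hac]; linarith
  · simp [Ne.symm hac]; linarith
  · rw [Finset.sum_congr rfl
      (fun t (_ : t ∈ univ) => add_smul (if t = a then 1 - s else 0) (if t = c then s else 0) (v t)),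
      Finset.sum_add_distrib]
    congr 1
    · simp only [ite_smul, zero_smul]
      simp [Finset.sum_ite_eq']
    · simp only [ite_smul, zero_smul]
      simp [Finset.sum_ite_eq']

include hconv

/-- for every index k, a point which is a convex combination supported in I
(strictly using k if k ∈ I) and likewise for J -/
lemma exists_weights {I J : Finset (Fin n)} (hdisj : Disjoint I J)
    {i₁ i₂ j₁ j₂ : Fin n} (hi₁ : i₁ ∈ I) (hi₂ : i₂ ∈ I) (hj₁ : j₁ ∈ J) (hj₂ : j₂ ∈ J)
    (h1 : i₁ < j₁) (h2 : j₁ < i₂) (h3 : i₂ < j₂) (k : Fin n) :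
    ∃ wi wj : Fin n → ℝ,
      (∀ t, 0 ≤ wi t) ∧ (∀ t, wi t ≠ 0 → t ∈ I) ∧ (∑ t, wi t = 1) ∧
      (∀ t, 0 ≤ wj t) ∧ (∀ t, wj t ≠ 0 → t ∈ J) ∧ (∑ t, wj t = 1) ∧
      (k ∈ I → 0 < wi k) ∧ (k ∈ J → 0 < wj k) ∧
      (∑ t, wi t • v t = ∑ t, wj t • v t) := by
  classical
  -- helper to package a crossing into the two weight functions
  have pack : ∀ (a c b d : Fin n), a ∈ I → c ∈ I → b ∈ J → d ∈ J → a ≠ c → b ≠ d →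
      ∀ s t : ℝ, 0 < s → s < 1 → 0 < t → t < 1 →
      (1 - s) • v a + s • v c = (1 - t) • v b + t • v d →
      ∃ wi wj : Fin n → ℝ,
        (∀ t, 0 ≤ wi t) ∧ (∀ t, wi t ≠ 0 → t ∈ I) ∧ (∑ t, wi t = 1) ∧
        (∀ t, 0 ≤ wj t) ∧ (∀ t, wj t ≠ 0 → t ∈ J) ∧ (∑ t, wj t = 1) ∧
        0 < wi a ∧ 0 < wi c ∧ 0 < wj b ∧ 0 < wj d ∧
        (∑ t, wi t • v t = ∑ t, wj t • v t) := by
    intro a c b d haI hcI hbJ hdJ hac hbd s t hs0 hs1 ht0 ht1 heq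
    obtain ⟨wi, p1, p2, p3, p4, p5, p6⟩ := pairW v hac hs0 hs1
    obtain ⟨wj, q1, q2, q3, q4, q5, q6⟩ := pairW v hbd ht0 ht1
    exact ⟨wi, wj, p1,
      (fun u hu => by rcases p2 u hu with rfl | rfl; exacts [haI, hcI]), p3,
      q1, (fun u hu => by rcases q2 u hu with rfl | rfl; exacts [hbJ, hdJ]), q3,
      p4, p5, q4, q5, by rw [p6, q6, heq]⟩
  by_cases hkI : k ∈ I
  · have hkJ : k ∉ J := Finset.disjoint_left.1 hdisj hkI
    have hkj₁ : k ≠ j₁ := fun h => hkJ (h ▸ hj₁)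
    have hkj₂ : k ≠ j₂ := fun h => hkJ (h ▸ hj₂)
    rcases lt_or_gt_of_ne hkj₁ with hk1 | hk1
    · -- k < j₁ : chords (k,i₂) and (j₁,j₂)
      obtain ⟨s, t, hs0, hs1, ht0, ht1, heq⟩ := cross_idx hconv hk1 h2 h3
      obtain ⟨wi, wj, c1, c2, c3, c4, c5, c6, c7, c8, c9, c10, c11⟩ :=
        pack k i₂ j₁ j₂ hkI hi₂ hj₁ hj₂ (ne_of_lt (hk1.trans h2)) (ne_of_lt (h2.trans h3))
          s t hs0 hs1 ht0 ht1 heq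
      exact ⟨wi, wj, c1, c2, c3, c4, c5, c6, fun _ => c7, fun h => absurd h hkJ, c11⟩
    · rcases lt_or_gt_of_ne hkj₂ with hk2 | hk2
      · -- j₁ < k < j₂ : chords (i₁,k) and (j₁,j₂)
        obtain ⟨s, t, hs0, hs1, ht0, ht1, heq⟩ := cross_idx hconv h1 hk1 hk2
        obtain ⟨wi, wj, c1, c2, c3, c4, c5, c6, c7, c8, c9, c10, c11⟩ :=
          pack i₁ k j₁ j₂ hi₁ hkI hj₁ hj₂ (ne_of_lt (h1.trans hk1)) (ne_of_lt (h2.trans h3))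
            s t hs0 hs1 ht0 ht1 heq
        exact ⟨wi, wj, c1, c2, c3, c4, c5, c6, fun _ => c8, fun h => absurd h hkJ, c11⟩
      · -- j₂ < k : chords (i₂,k) and (j₁,j₂); sorted j₁ < i₂ < j₂ < k
        obtain ⟨s, t, hs0, hs1, ht0, ht1, heq⟩ := cross_idx hconv h2 h3 hk2
        -- heq : (1-s) • v j₁ + s • v j₂ = (1-t) • v i₂ + t • v k
        obtain ⟨wi, wj, c1, c2, c3, c4, c5, c6, c7, c8, c9, c10, c11⟩ :=
          pack i₂ k j₁ j₂ hi₂ hkI hj₁ hj₂ (ne_of_lt (h3.trans hk2)) (ne_of_lt (h2.trans h3))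
            t s ht0 ht1 hs0 hs1 heq.symm
        exact ⟨wi, wj, c1, c2, c3, c4, c5, c6, fun _ => c8, fun h => absurd h hkJ, c11⟩
  · by_cases hkJ : k ∈ J
    · have hki₁ : k ≠ i₁ := fun h => hkI (h ▸ hi₁)
      have hki₂ : k ≠ i₂ := fun h => hkI (h ▸ hi₂)
      rcases lt_or_gt_of_ne hki₁ with hk1 | hk1
      · -- k < i₁ : chords (i₁,i₂) and (k,j₁); sorted k < i₁ < j₁ < i₂
        obtain ⟨s, t, hs0, hs1, ht0, ht1, heq⟩ := cross_idx hconv hk1 h1 h2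
        -- heq : (1-s) • v k + s • v j₁ = (1-t) • v i₁ + t • v i₂
        obtain ⟨wi, wj, c1, c2, c3, c4, c5, c6, c7, c8, c9, c10, c11⟩ :=
          pack i₁ i₂ k j₁ hi₁ hi₂ hkJ hj₁ (ne_of_lt (h1.trans h2)) (ne_of_lt (hk1.trans h1))
            t s ht0 ht1 hs0 hs1 heq.symm
        exact ⟨wi, wj, c1, c2, c3, c4, c5, c6, fun h => absurd h hkI, fun _ => c9, c11⟩
      · rcases lt_or_gt_of_ne hki₂ with hk2 | hk2
        · -- i₁ < k < i₂ : chords (i₁,i₂) and (k,j₂)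
          obtain ⟨s, t, hs0, hs1, ht0, ht1, heq⟩ := cross_idx hconv hk1 hk2 h3
          -- heq : (1-s) • v i₁ + s • v i₂ = (1-t) • v k + t • v j₂
          obtain ⟨wi, wj, c1, c2, c3, c4, c5, c6, c7, c8, c9, c10, c11⟩ :=
            pack i₁ i₂ k j₂ hi₁ hi₂ hkJ hj₂ (ne_of_lt (hk1.trans hk2)) (ne_of_lt (hk2.trans h3))
              s t hs0 hs1 ht0 ht1 heq
          exact ⟨wi, wj, c1, c2, c3, c4, c5, c6, fun h => absurd h hkI, fun _ => c9, c11⟩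
        · -- i₂ < k : chords (i₁,i₂) and (j₁,k); sorted i₁ < j₁ < i₂ < k
          obtain ⟨s, t, hs0, hs1, ht0, ht1, heq⟩ := cross_idx hconv h1 h2 hk2
          -- heq : (1-s) • v i₁ + s • v i₂ = (1-t) • v j₁ + t • v k
          obtain ⟨wi, wj, c1, c2, c3, c4, c5, c6, c7, c8, c9, c10, c11⟩ :=
            pack i₁ i₂ j₁ k hi₁ hi₂ hj₁ hkJ (ne_of_lt (h1.trans h2)) (ne_of_lt (h2.trans hk2))
              s t hs0 hs1 ht0 ht1 heq
          exact ⟨wi, wj, c1, c2, c3, c4, c5, c6, fun h => absurd h hkI, fun _ => c10, c11⟩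
    · -- k in neither: base crossing (i₁,i₂) and (j₁,j₂)
      obtain ⟨s, t, hs0, hs1, ht0, ht1, heq⟩ := cross_idx hconv h1 h2 h3
      obtain ⟨wi, wj, c1, c2, c3, c4, c5, c6, c7, c8, c9, c10, c11⟩ :=
        pack i₁ i₂ j₁ j₂ hi₁ hi₂ hj₁ hj₂ (ne_of_lt (h1.trans h2)) (ne_of_lt (h2.trans h3))
          s t hs0 hs1 ht0 ht1 heq
      exact ⟨wi, wj, c1, c2, c3, c4, c5, c6, fun h => absurd h hkI, fun h => absurd h hkJ, c11⟩

/-- forward direction in the IJIJ pattern -/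
lemma forward_IJIJ {I J : Finset (Fin n)} (hdisj : Disjoint I J)
    {i₁ i₂ j₁ j₂ : Fin n} (hi₁ : i₁ ∈ I) (hi₂ : i₂ ∈ I) (hj₁ : j₁ ∈ J) (hj₂ : j₂ ∈ J)
    (h1 : i₁ < j₁) (h2 : j₁ < i₂) (h3 : i₂ < j₂) :
    (intrinsicInterior ℝ (convexHull ℝ (v '' ↑I)) ∩
      intrinsicInterior ℝ (convexHull ℝ (v '' ↑J))).Nonempty := by
  classical
  have H := fun k => exists_weights hconv hdisj hi₁ hi₂ hj₁ hj₂ h1 h2 h3 k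
  choose wi wj a1 a2 a3 a4 a5 a6 a7 a8 a9 using H
  set K : Finset (Fin n) := I ∪ J with hK
  have hKne : K.Nonempty := ⟨i₁, by simp [hK, hi₁]⟩
  have hN0 : 0 < ((K.card : ℝ)) := by exact_mod_cast Finset.card_pos.2 hKne
  set N : ℝ := (K.card : ℝ) with hN
  have e : ∀ (w : Fin n → Fin n → ℝ),
      ∑ u, ((∑ k ∈ K, w k u) / N) • v u = N⁻¹ • ∑ k ∈ K, ∑ u, w k u • v u := by
    intro w
    calc ∑ u, ((∑ k ∈ K, w k u) / N) • v u
        = ∑ u, N⁻¹ • ((∑ k ∈ K, w k u) • v u) := by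
          refine Finset.sum_congr rfl fun u _ => ?_
          rw [smul_smul, div_eq_inv_mul]
      _ = N⁻¹ • ∑ u, (∑ k ∈ K, w k u) • v u := (Finset.smul_sum).symm
      _ = N⁻¹ • ∑ u, ∑ k ∈ K, w k u • v u := by
          congr 1
          exact Finset.sum_congr rfl fun u _ => Finset.sum_smul
      _ = N⁻¹ • ∑ k ∈ K, ∑ u, w k u • v u := by rw [Finset.sum_comm]
  have hpt : ∑ u, ((∑ k ∈ K, wi k u) / N) • v u = ∑ u, ((∑ k ∈ K, wj k u) / N) • v u := by
    rw [e wi, e wj]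
    congr 1
    exact Finset.sum_congr rfl fun k _ => a9 k
  have hsum1 : ∀ (w : Fin n → Fin n → ℝ), (∀ k, ∑ u, w k u = 1) →
      ∑ u, (∑ k ∈ K, w k u) / N = 1 := by
    intro w hw
    rw [← Finset.sum_div, Finset.sum_comm,
      Finset.sum_congr rfl (fun k (_ : k ∈ K) => hw k),
      Finset.sum_const, nsmul_eq_mul, mul_one]
    exact div_self (ne_of_gt hN0)
  have hrestr : ∀ (W : Fin n → ℝ) (S : Finset (Fin n)), (∀ u, u ∉ S → W u = 0) →
      (∑ u ∈ S, W u = ∑ u, W u) ∧ (∑ u ∈ S, W u • v u = ∑ u, W u • v u) := by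
    intro W S hW
    constructor
    · exact Finset.sum_subset (Finset.subset_univ S) (fun u _ hu => hW u hu)
    · exact Finset.sum_subset (Finset.subset_univ S)
        (fun u _ hu => by rw [hW u hu, zero_smul])
  have hWIsupp : ∀ u, u ∉ I → (∑ k ∈ K, wi k u) / N = 0 := by
    intro u hu
    rw [Finset.sum_eq_zero (fun k _ => by_contra fun h => hu (a2 k u h)), zero_div]
  have hWJsupp : ∀ u, u ∉ J → (∑ k ∈ K, wj k u) / N = 0 := by
    intro u hu
    rw [Finset.sum_eq_zero (fun k _ => by_contra fun h => hu (a5 k u h)), zero_div]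
  have hWIpos : ∀ u ∈ I, 0 < (∑ k ∈ K, wi k u) / N := by
    intro u hu
    exact div_pos (Finset.sum_pos' (fun k _ => a1 k u)
      ⟨u, by simp [hK, hu], a7 u hu⟩) hN0
  have hWJpos : ∀ u ∈ J, 0 < (∑ k ∈ K, wj k u) / N := by
    intro u hu
    exact div_pos (Finset.sum_pos' (fun k _ => a4 k u)
      ⟨u, by simp [hK, hu], a8 u hu⟩) hN0
  obtain ⟨rI1, rI2⟩ := hrestr (fun u => (∑ k ∈ K, wi k u) / N) I hWIsupp
  obtain ⟨rJ1, rJ2⟩ := hrestr (fun u => (∑ k ∈ K, wj k u) / N) J hWJsupp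
  have hImem := posCombo_mem_intrinsicInterior v I (fun u => (∑ k ∈ K, wi k u) / N)
    hWIpos (by rw [rI1]; exact hsum1 wi a3)
  have hJmem := posCombo_mem_intrinsicInterior v J (fun u => (∑ k ∈ K, wj k u) / N)
    hWJpos (by rw [rJ1]; exact hsum1 wj a6)
  refine ⟨∑ u ∈ I, ((∑ k ∈ K, wi k u) / N) • v u, hImem, ?_⟩
  have : (∑ u ∈ I, ((∑ k ∈ K, wi k u) / N) • v u)
      = ∑ u ∈ J, ((∑ k ∈ K, wj k u) / N) • v u := by
    rw [rI2, rJ2]  -- to full sums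
    exact hpt
  rw [this]
  exact hJmem

end


lemma no_interleave_cases {n : ℕ} (I J : Finset (Fin n)) (hI : I.Nonempty) (hJ : J.Nonempty)
    (hdisj : Disjoint I J)
    (hno : ¬ ∃ i₁ ∈ I, ∃ i₂ ∈ I, ∃ j₁ ∈ J, ∃ j₂ ∈ J, CyclicOrder4 i₁ j₁ i₂ j₂) :
    (∀ j ∈ J, j < I.min' hI ∨ I.max' hI < j) ∨ (∀ i ∈ I, i < J.min' hJ ∨ J.max' hJ < i) := by
  by_contra hc
  push_neg at hc
  obtain ⟨⟨j₀, hj₀J, hj₀⟩, ⟨i₀, hi₀I, hi₀⟩⟩ := hc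
  have h1 : I.min' hI < j₀ := lt_of_le_of_ne hj₀.1
    (fun h => Finset.disjoint_left.1 hdisj (h ▸ I.min'_mem hI) hj₀J)
  have h2 : j₀ < I.max' hI := lt_of_le_of_ne hj₀.2
    (fun h => Finset.disjoint_left.1 hdisj (h ▸ I.max'_mem hI) hj₀J)
  have h3 : J.min' hJ < i₀ := lt_of_le_of_ne hi₀.1
    (fun h => Finset.disjoint_left.1 hdisj hi₀I (h ▸ J.min'_mem hJ))
  have h4 : i₀ < J.max' hJ := lt_of_le_of_ne hi₀.2
    (fun h => Finset.disjoint_left.1 hdisj hi₀I (h.symm ▸ J.max'_mem hJ))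
  rcases lt_or_gt_of_ne
      (show i₀ ≠ j₀ from fun h => Finset.disjoint_left.1 hdisj hi₀I (h ▸ hj₀J)) with h | h
  · exact hno ⟨i₀, hi₀I, I.max' hI, I.max'_mem hI, j₀, hj₀J, J.min' hJ, J.min'_mem hJ,
      Or.inr (Or.inr (Or.inr ⟨h3, h, h2⟩))⟩
  · exact hno ⟨I.min' hI, I.min'_mem hI, i₀, hi₀I, j₀, hj₀J, J.max' hJ, J.max'_mem hJ,
      Or.inl ⟨h1, h, h4⟩⟩


/-- Let `v 1, …, v n` (`n ≥ 3`) be the vertices, listed clockwise, of a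
convex `n`-gon in `ℝ²` (encoded by the strict clockwise orientation of all triples),
and let `I, J` be disjoint nonempty sets of indices.  The relative interiors of the
convex hulls of `{v i : i ∈ I}` and `{v j : j ∈ J}` intersect iff there are
`i₁, i₂ ∈ I` and `j₁, j₂ ∈ J` with `i₁, j₁, i₂, j₂` in clockwise cyclic order. -/
theorem stmt6 (n : ℕ) (hn : 3 ≤ n) (v : Fin n → ℝ × ℝ)
    (hconv : ∀ i j k : Fin n, i < j → j < k →
      ((v j).1 - (v i).1) * ((v k).2 - (v i).2) -
        ((v j).2 - (v i).2) * ((v k).1 - (v i).1) < 0)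
    (I J : Finset (Fin n)) (hI : I.Nonempty) (hJ : J.Nonempty)
    (hdisj : Disjoint I J) :
    (intrinsicInterior ℝ (convexHull ℝ (v '' I)) ∩
        intrinsicInterior ℝ (convexHull ℝ (v '' J))).Nonempty ↔
      ∃ i₁ ∈ I, ∃ i₂ ∈ I, ∃ j₁ ∈ J, ∃ j₂ ∈ J, CyclicOrder4 i₁ j₁ i₂ j₂ := by
  constructor
  · rintro ⟨x, hxI, hxJ⟩
    by_contra hno
    have hsep := no_interleave_cases I J hI hJ hdisj hno
    have hdisjhull : Disjoint (convexHull ℝ (v '' ↑I)) (convexHull ℝ (v '' ↑J)) := by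
      rcases hsep with h | h
      · exact (sep_core hconv hn J I hJ hI hdisj.symm h).symm
      · exact sep_core hconv hn I J hI hJ hdisj h
    exact Set.disjoint_left.1 hdisjhull (intrinsicInterior_subset hxI)
      (intrinsicInterior_subset hxJ)
  · rintro ⟨i₁, hi₁, i₂, hi₂, j₁, hj₁, j₂, hj₂, hcyc⟩
    rcases hcyc with ⟨h1, h2, h3⟩ | ⟨h1, h2, h3⟩ | ⟨h1, h2, h3⟩ | ⟨h1, h2, h3⟩
    · exact forward_IJIJ hconv hdisj hi₁ hi₂ hj₁ hj₂ h1 h2 h3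
    · rw [Set.inter_comm]
      exact forward_IJIJ hconv hdisj.symm hj₁ hj₂ hi₂ hi₁ h1 h2 h3
    · exact forward_IJIJ hconv hdisj hi₂ hi₁ hj₂ hj₁ h1 h2 h3
    · rw [Set.inter_comm]
      exact forward_IJIJ hconv hdisj.symm hj₂ hj₁ hi₁ hi₂ h1 h2 h3
end
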